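/- Let 𝕂 be ℝ or ℂ and let V be a finite-dimensional 𝕂-vector space. For an alternating bilinear map A : V × V → 𝕂 (A(x,y) = −A(y,x)) define the 4-linear map α(A) : V⁴ → 𝕂 by α(A)(w,x,y,z) = (1/3)(2·A(w,x)·A(y,z) + A(w,y)·A(x,z) − A(w,z)·A(x,y)). Then the 𝕂-linear span of the set { α(A) : A alternating bilinear on V } equals the vector space of all algebraic curvature tensors on V. -/

import Mathlib

/-!
Let `Q` (`curvatureSymm`) be the linear operator on 4-linear forms with
`6 Q(T)(w,x,y,z) = 2(T(w,x,y,z) + T(y,z,w,x)) + T(w,y,x,z) + T(x,z,w,y) - T(w,z,x,y) - T(x,y,w,z)`.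
Then `Q(A ⊗ A) = α(A)`, so `Q(A ⊗ B) = (α(A + B) - α(A) - α(B)) / 2` lies in the span of the
`α`'s, while pair symmetry and the Bianchi identity give `Q(R) = R` for every curvature tensor `R`.
In a basis with coordinate forms `eⁱ`, antisymmetry in each pair gives
`4 R = ∑ R(eᵢ, eⱼ, eₖ, eₗ) (eⁱ ∧ eʲ) ⊗ (eᵏ ∧ eˡ)`, and applying `Q` writes `R` as a combination of
the `Q((eⁱ ∧ eʲ) ⊗ (eᵏ ∧ eˡ))`. Conversely each `α(A)` satisfies the curvature identities by a
direct computation.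
-/

/-- An algebraic curvature tensor on a `𝕂`-vector space `V`: a 4-linear map `T : V⁴ → 𝕂`
with `T(w,x,y,z) = -T(w,x,z,y) = T(y,z,w,x)` and the first Bianchi identity. -/
def IsACT {𝕂 : Type*} [RCLike 𝕂] {V : Type*} [AddCommGroup V] [Module 𝕂 V]
    (T : MultilinearMap 𝕂 (fun _ : Fin 4 => V) 𝕂) : Prop :=
  ∀ w x y z : V,
    T ![w, x, y, z] = - T ![w, x, z, y] ∧
    T ![w, x, y, z] = T ![y, z, w, x] ∧
    T ![w, x, y, z] + T ![w, y, z, x] + T ![w, z, x, y] = 0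

section CommSemiring

variable {R : Type*} [CommSemiring R] {V : Type*} [AddCommMonoid V] [Module R V]

theorem Matrix.vec_eta_four {α : Type*} (v : Fin 4 → α) : ![v 0, v 1, v 2, v 3] = v := by
  ext i; fin_cases i <;> rfl

theorem MultilinearMap.ext_fin_four {M : Type*} [AddCommMonoid M] [Module R M]
    {S T : MultilinearMap R (fun _ : Fin 4 => V) M}
    (h : ∀ w x y z, S ![w, x, y, z] = T ![w, x, y, z]) : S = T := by
  ext v
  simpa only [Matrix.vec_eta_four] using h (v 0) (v 1) (v 2) (v 3)

theorem Module.Basis.ext_multilinear_fin_four {ι : Type*} [Finite ι] {M : Type*}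
    [AddCommMonoid M] [Module R M] (b : Module.Basis ι R V)
    {S T : MultilinearMap R (fun _ : Fin 4 => V) M}
    (h : ∀ p q r s, S ![b p, b q, b r, b s] = T ![b p, b q, b r, b s]) : S = T := by
  refine Module.Basis.ext_multilinear (fun _ => b) fun v => ?_
  simpa only [← Matrix.vec_eta_four (fun i => b (v i))] using h (v 0) (v 1) (v 2) (v 3)

noncomputable def bilinMul (A B : MultilinearMap R (fun _ : Fin 2 => V) R) :
    MultilinearMap R (fun _ : Fin 4 => V) R :=
  ((LinearMap.mul' R R).compMultilinearMap (A.domCoprod B)).domDomCongr finSumFinEquiv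

@[simp]
theorem bilinMul_apply (A B : MultilinearMap R (fun _ : Fin 2 => V) R) (w x y z : V) :
    bilinMul A B ![w, x, y, z] = A ![w, x] * B ![y, z] := by
  simp only [bilinMul, MultilinearMap.domDomCongr_apply, LinearMap.compMultilinearMap_apply,
    MultilinearMap.domCoprod_apply, LinearMap.mul'_apply]
  congr 2 <;> ext i <;> fin_cases i <;> rfl

end CommSemiring

section CommRing

variable {R : Type*} [CommRing R] {V : Type*} [AddCommMonoid V] [Module R V]

noncomputable def wedge (f g : V →ₗ[R] R) : MultilinearMap R (fun _ : Fin 2 => V) R :=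
  (MultilinearMap.mkPiAlgebra R (Fin 2) R).compLinearMap ![f, g] -
    (MultilinearMap.mkPiAlgebra R (Fin 2) R).compLinearMap ![g, f]

@[simp]
theorem wedge_apply (f g : V →ₗ[R] R) (x y : V) :
    wedge f g ![x, y] = f x * g y - g x * f y := by
  simp [wedge]

theorem wedge_apply_swap (f g : V →ₗ[R] R) (x y : V) :
    wedge f g ![x, y] = - wedge f g ![y, x] := by
  simp only [wedge_apply]; ring

theorem sum_sum_mul_wedge_coord {ι : Type*} [Fintype ι] (b : Module.Basis ι R V)
    (c : ι → ι → R) (p q : ι) :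
    ∑ i, ∑ j, c i j * wedge (b.coord i) (b.coord j) ![b p, b q] = c p q - c q p := by
  classical
  simp [Module.Basis.coord_apply, Finsupp.single_apply, mul_sub, Finset.sum_sub_distrib]

end CommRing

section Field

variable {𝕂 : Type*} [Field 𝕂] {V : Type*} [AddCommMonoid V] [Module 𝕂 V]

noncomputable def curvatureSymm :
    MultilinearMap 𝕂 (fun _ : Fin 4 => V) 𝕂 →ₗ[𝕂] MultilinearMap 𝕂 (fun _ : Fin 4 => V) 𝕂 where
  toFun T :=
    let S := T + T.domDomCongr (Equiv.swap 0 2 * Equiv.swap 1 3)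
    (6 : 𝕂)⁻¹ • ((2 : 𝕂) • S + S.domDomCongr (Equiv.swap 1 2)
      - S.domDomCongr (Equiv.swap 2 3 * Equiv.swap 1 2))
  map_add' S T := by
    ext v
    simp only [add_apply, smul_apply, sub_apply, MultilinearMap.domDomCongr_apply, smul_eq_mul]
    ring
  map_smul' c T := by
    ext v
    simp only [add_apply, smul_apply, sub_apply, MultilinearMap.domDomCongr_apply, smul_eq_mul,
      RingHom.id_apply]
    ring

theorem curvatureSymm_apply (T : MultilinearMap 𝕂 (fun _ : Fin 4 => V) 𝕂) (w x y z : V) :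
    curvatureSymm T ![w, x, y, z] = (6 : 𝕂)⁻¹ * (2 * (T ![w, x, y, z] + T ![y, z, w, x])
      + (T ![w, y, x, z] + T ![x, z, w, y]) - (T ![w, z, x, y] + T ![x, y, w, z])) := by
  simp only [curvatureSymm, LinearMap.coe_mk, AddHom.coe_mk, add_apply, smul_apply, sub_apply,
    MultilinearMap.domDomCongr_apply, smul_eq_mul]
  congrm (6 : 𝕂)⁻¹ * (2 * (T ?_ + T ?_) + (T ?_ + T ?_) - (T ?_ + T ?_)) <;>
    ext i <;> fin_cases i <;> rfl

theorem two_smul_curvatureSymm_bilinMul (A B : MultilinearMap 𝕂 (fun _ : Fin 2 => V) 𝕂) :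
    (2 : 𝕂) • curvatureSymm (bilinMul A B) = curvatureSymm (bilinMul (A + B) (A + B))
      - curvatureSymm (bilinMul A A) - curvatureSymm (bilinMul B B) :=
  MultilinearMap.ext_fin_four fun w x y z => by
    simp only [curvatureSymm_apply, bilinMul_apply, smul_apply, sub_apply, add_apply,
      smul_eq_mul]
    ring

theorem curvatureSymm_bilinMul_self_apply [CharZero 𝕂]
    (A : MultilinearMap 𝕂 (fun _ : Fin 2 => V) 𝕂) (w x y z : V) :
    curvatureSymm (bilinMul A A) ![w, x, y, z] = (3 : 𝕂)⁻¹ * (2 * (A ![w, x] * A ![y, z])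
      + A ![w, y] * A ![x, z] - A ![w, z] * A ![x, y]) := by
  simp only [curvatureSymm_apply, bilinMul_apply]; ring

variable (𝕂 V) in
def skewCurvatureTensors : Set (MultilinearMap 𝕂 (fun _ : Fin 4 => V) 𝕂) :=
  {T | ∃ A : MultilinearMap 𝕂 (fun _ : Fin 2 => V) 𝕂,
    (∀ x y : V, A ![x, y] = - A ![y, x]) ∧
    ∀ w x y z : V,
      T ![w, x, y, z] =
        (3 : 𝕂)⁻¹ * (2 * (A ![w, x] * A ![y, z]) + A ![w, y] * A ![x, z]
          - A ![w, z] * A ![x, y])}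

theorem curvatureSymm_bilinMul_mem_span [CharZero 𝕂] {A B : MultilinearMap 𝕂 (fun _ : Fin 2 => V) 𝕂}
    (hA : ∀ x y : V, A ![x, y] = - A ![y, x]) (hB : ∀ x y : V, B ![x, y] = - B ![y, x]) :
    curvatureSymm (bilinMul A B) ∈ Submodule.span 𝕂 (skewCurvatureTensors 𝕂 V) := by
  have hAB : ∀ x y : V, (A + B) ![x, y] = - (A + B) ![y, x] := fun x y => by
    simp only [add_apply, hA x y, hB x y, neg_add]
  have mem_span {C : MultilinearMap 𝕂 (fun _ : Fin 2 => V) 𝕂}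
      (hC : ∀ x y : V, C ![x, y] = - C ![y, x]) :
      curvatureSymm (bilinMul C C) ∈ Submodule.span 𝕂 (skewCurvatureTensors 𝕂 V) :=
    Submodule.subset_span ⟨C, hC, curvatureSymm_bilinMul_self_apply C⟩
  rw [← inv_smul_smul₀ (two_ne_zero (α := 𝕂)) (curvatureSymm (bilinMul A B)),
    two_smul_curvatureSymm_bilinMul]
  exact Submodule.smul_mem _ _
    (Submodule.sub_mem _ (Submodule.sub_mem _ (mem_span hAB) (mem_span hA)) (mem_span hB))

end Field

section RCLike

variable {𝕂 : Type*} [RCLike 𝕂] {V : Type*} [AddCommGroup V] [Module 𝕂 V]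

theorem IsACT.apply_swap_left {T : MultilinearMap 𝕂 (fun _ : Fin 4 => V) 𝕂} (hT : IsACT T)
    (w x y z : V) : T ![x, w, y, z] = - T ![w, x, y, z] := by
  rw [(hT x w y z).2.1, (hT y z x w).1, (hT w x y z).2.1]

theorem curvatureSymm_eq_self {T : MultilinearMap 𝕂 (fun _ : Fin 4 => V) 𝕂} (hT : IsACT T) :
    curvatureSymm T = T :=
  MultilinearMap.ext_fin_four fun w x y z => by
    obtain ⟨-, hpair, hbianchi⟩ := hT w x y z
    rw [curvatureSymm_apply, ← hpair, ← (hT w y x z).2.1, ← (hT w z x y).2.1, (hT w y x z).1]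
    linear_combination (-(3 : 𝕂)⁻¹) * hbianchi

theorem sum_smul_bilinMul_wedge_coord {ι : Type*} [Fintype ι] (b : Module.Basis ι 𝕂 V)
    {T : MultilinearMap 𝕂 (fun _ : Fin 4 => V) 𝕂} (hT : IsACT T) :
    ∑ i, ∑ j, ∑ k, ∑ l, T ![b i, b j, b k, b l] •
      bilinMul (wedge (b.coord i) (b.coord j)) (wedge (b.coord k) (b.coord l)) = (4 : 𝕂) • T := by
  refine b.ext_multilinear_fin_four fun p q r s => ?_
  simp only [sum_apply, smul_apply, bilinMul_apply, smul_eq_mul]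
  simp_rw [mul_left_comm _ (wedge _ _ ![b p, b q]), ← Finset.mul_sum]
  simp_rw [sum_sum_mul_wedge_coord, mul_comm (wedge _ _ ![b p, b q]), sum_sum_mul_wedge_coord]
  rw [hT.apply_swap_left (b p), hT.apply_swap_left (b p)]
  linear_combination (-2 : 𝕂) * (hT (b p) (b q) (b r) (b s)).1

theorem eq_inv_smul_sum_curvatureSymm_wedge_coord {ι : Type*} [Fintype ι]
    (b : Module.Basis ι 𝕂 V) {T : MultilinearMap 𝕂 (fun _ : Fin 4 => V) 𝕂} (hT : IsACT T) :
    T = (4 : 𝕂)⁻¹ • ∑ i, ∑ j, ∑ k, ∑ l, T ![b i, b j, b k, b l] •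
      curvatureSymm (bilinMul (wedge (b.coord i) (b.coord j)) (wedge (b.coord k) (b.coord l))) := by
  simp only [← map_smul, ← map_sum, sum_smul_bilinMul_wedge_coord b hT, curvatureSymm_eq_self hT,
    inv_smul_smul₀ (by norm_num : (4 : 𝕂) ≠ 0)]

theorem isACT_of_mem_skewCurvatureTensors {T : MultilinearMap 𝕂 (fun _ : Fin 4 => V) 𝕂}
    (hT : T ∈ skewCurvatureTensors 𝕂 V) : IsACT T := by
  obtain ⟨A, hA, hTA⟩ := hT
  refine fun w x y z => ⟨?_, ?_, ?_⟩
  · rw [hTA, hTA, hA z y]; ring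
  · rw [hTA, hTA, hA y w, hA y x, hA z w, hA z x]; ring
  · rw [hTA, hTA, hTA, hA z x, hA y x, hA z y]; ring

variable (𝕂 V) in
def curvatureTensors : Submodule 𝕂 (MultilinearMap 𝕂 (fun _ : Fin 4 => V) 𝕂) where
  carrier := {T | IsACT T}
  add_mem' {S T} hS hT w x y z := by
    obtain ⟨hS₁, hS₂, hS₃⟩ := hS w x y z
    obtain ⟨hT₁, hT₂, hT₃⟩ := hT w x y z
    simp only [add_apply]
    exact ⟨by linear_combination hS₁ + hT₁, by linear_combination hS₂ + hT₂,
      by linear_combination hS₃ + hT₃⟩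
  zero_mem' w x y z := by simp
  smul_mem' c T hT w x y z := by
    obtain ⟨hT₁, hT₂, hT₃⟩ := hT w x y z
    simp only [smul_apply, smul_eq_mul]
    exact ⟨by linear_combination c * hT₁, by linear_combination c * hT₂,
      by linear_combination c * hT₃⟩

theorem span_skewCurvatureTensors [FiniteDimensional 𝕂 V] :
    Submodule.span 𝕂 (skewCurvatureTensors 𝕂 V) = curvatureTensors 𝕂 V := by
  refine le_antisymm (Submodule.span_le.mpr fun T => isACT_of_mem_skewCurvatureTensors)
    fun T hT => ?_
  rw [eq_inv_smul_sum_curvatureSymm_wedge_coord (Module.finBasis 𝕂 V) hT]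
  exact Submodule.smul_mem _ _ <| Submodule.sum_mem _ fun i _ => Submodule.sum_mem _ fun j _ =>
    Submodule.sum_mem _ fun k _ => Submodule.sum_mem _ fun l _ => Submodule.smul_mem _ _ <|
      curvatureSymm_bilinMul_mem_span (wedge_apply_swap _ _) (wedge_apply_swap _ _)

end RCLike

theorem stmt1 {𝕂 : Type*} [RCLike 𝕂] (V : Type*) [AddCommGroup V] [Module 𝕂 V]
    [FiniteDimensional 𝕂 V] :
    (Submodule.span 𝕂
        {T : MultilinearMap 𝕂 (fun _ : Fin 4 => V) 𝕂 |
          ∃ A : MultilinearMap 𝕂 (fun _ : Fin 2 => V) 𝕂,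
            (∀ x y : V, A ![x, y] = - A ![y, x]) ∧
            ∀ w x y z : V,
              T ![w, x, y, z] =
                (3 : 𝕂)⁻¹ * (2 * (A ![w, x] * A ![y, z]) + A ![w, y] * A ![x, z]
                  - A ![w, z] * A ![x, y])} :
      Set (MultilinearMap 𝕂 (fun _ : Fin 4 => V) 𝕂)) =
      {T | IsACT T} :=
  congrArg SetLike.coe (span_skewCurvatureTensors (𝕂 := 𝕂) (V := V))
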